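/- For every c ∈ [−1,1] and every θ ∈ ℝ one has Δ(θ) ≤ (15 + cos θ) − (5 + 3 cos θ)c; consequently, for every h > 0 the two symbols are real and non-positive: Q̂₂(θ) ≤ Q̂₁(θ) ≤ 0 (Von Neumann stability of the BFD scheme). -/
import Mathlib


/-- `Ω(θ) = −cos(θ/2)(16 − (7 + cos θ)c)`. -/
noncomputable def Om (c θ : ℝ) : ℝ :=
  -Real.cos (θ/2) * (16 - (7 + Real.cos θ)*c)

/-- `Δ(θ) = √(Ω(θ)² + 4c² sin⁶(θ/2))`. -/
noncomputable def Del (c θ : ℝ) : ℝ :=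
  Real.sqrt ((Om c θ)^2 + 4*c^2*(Real.sin (θ/2))^6)

/-- The symbol `Q̂₁(θ)`. -/
noncomputable def Qhat1 (c h θ : ℝ) : ℝ :=
  (2/(3*h^2)) * (-(15 + Real.cos θ) + (5 + 3*Real.cos θ)*c + Del c θ)

/-- The symbol `Q̂₂(θ)`. -/
noncomputable def Qhat2 (c h θ : ℝ) : ℝ :=
  (2/(3*h^2)) * (-(15 + Real.cos θ) + (5 + 3*Real.cos θ)*c - Del c θ)

/-- Von Neumann stability of the BFD scheme: for `c ∈ [-1,1]` one has
`Δ(θ) ≤ (15 + cos θ) − (5 + 3 cos θ)c`, hence for every `h > 0` the two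
symbols are real and non-positive: `Q̂₂(θ) ≤ Q̂₁(θ) ≤ 0`. -/
theorem vonNeumann_stability (c : ℝ) (hc : c ∈ Set.Icc (-1 : ℝ) 1) (θ : ℝ) :
    Del c θ ≤ (15 + Real.cos θ) - (5 + 3*Real.cos θ)*c ∧
    ∀ h : ℝ, 0 < h → Qhat2 c h θ ≤ Qhat1 c h θ ∧ Qhat1 c h θ ≤ 0 := by
  obtain ⟨hc1, hc2⟩ := hc
  set s := Real.sin (θ/2) with hs
  set x := Real.cos (θ/2) with hx
  have hcosθ : Real.cos θ = 1 - 2*s^2 := by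
    have h2 : Real.cos (2*(θ/2)) = 2 * Real.cos (θ/2)^2 - 1 := Real.cos_two_mul (θ/2)
    have hsx : s^2 + x^2 = 1 := Real.sin_sq_add_cos_sq (θ/2)
    rw [show 2*(θ/2) = θ by ring] at h2
    rw [h2, ← hx]; linarith
  have hx2 : x^2 = 1 - s^2 := by
    have := Real.sin_sq_add_cos_sq (θ/2); linarith
  have hs2 : s^2 ≤ 1 := by nlinarith [Real.sin_sq_add_cos_sq (θ/2), sq_nonneg x]
  have hs0 : 0 ≤ s^2 := sq_nonneg s
  have hR0 : 0 ≤ (15 + Real.cos θ) - (5 + 3*Real.cos θ)*c := by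
    rw [hcosθ]; nlinarith
  have hkey : Del c θ ≤ (15 + Real.cos θ) - (5 + 3*Real.cos θ)*c := by
    rw [Del]
    rw [show (15 + Real.cos θ) - (5 + 3*Real.cos θ)*c =
      Real.sqrt (((15 + Real.cos θ) - (5 + 3*Real.cos θ)*c)^2) from
      (Real.sqrt_sq hR0).symm]
    apply Real.sqrt_le_sqrt
    rw [Om, hcosθ, ← hx, ← hs]
    have hA : (-x * (16 - (7 + (1 - 2*s^2))*c))^2 + 4*c^2*s^6
        = (1 - s^2)*(16 - (8 - 2*s^2)*c)^2 + 4*c^2*s^6 := by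
      rw [show (-x * (16 - (7 + (1 - 2*s^2))*c))^2
          = x^2 * (16 - (8 - 2*s^2)*c)^2 by ring, hx2]
    rw [hA]
    have hfac : (15 + (1 - 2*s^2) - (5 + 3*(1 - 2*s^2))*c)^2
        - ((1 - s^2)*(16 - (8 - 2*s^2)*c)^2 + 4*c^2*s^6)
        = 4*s^2*(48 - 24*c + s^2 + 10*s^2*c) := by ring
    have hpos : 0 ≤ 4*s^2*(48 - 24*c + s^2 + 10*s^2*c) := by
      apply mul_nonneg (by positivity)
      nlinarith [mul_nonneg hs0 (by linarith : (0:ℝ) ≤ c + 1), hs2, hs0]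
    linarith
  refine ⟨hkey, fun h hh => ?_⟩
  have hD0 : 0 ≤ Del c θ := Real.sqrt_nonneg _
  have hcoef : 0 < 2/(3*h^2) := by positivity
  constructor
  · rw [Qhat1, Qhat2]
    apply mul_le_mul_of_nonneg_left _ hcoef.le
    linarith
  · rw [Qhat1]
    apply mul_nonpos_of_nonneg_of_nonpos hcoef.le
    linarith
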